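/- Let G ∈ 𝓕, let 0 < ε ≤ 1, let p ∈ ℕ, and let (y_i)_{i=0}^p be any finite trajectory of y_0 under G. Then there exists a descending interval trajectory ([a_i, b_i])_{i=0}^p under G such that [a_0, b_0] ⊆ [ε/9, 1], [a_i, b_i] ⊆ [y_i − ε, y_i + ε] for each i ∈ {0, 1, ..., p}, and b_p − a_p ≥ ε²/9. -/
import Mathlib


open Set Filter Topology

/-- One-sided Mahavier product of a relation `F` on `X`. -/
def MahavierPlus {X : Type*} (F : Set (X × X)) : Set (ℕ → X) :=
  {x | ∀ n : ℕ, (x n, x (n + 1)) ∈ F}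

/-- Two-sided Mahavier product of a relation `F` on `X`. -/
def MahavierTwo {X : Type*} (F : Set (X × X)) : Set (ℤ → X) :=
  {x | ∀ n : ℤ, (x n, x (n + 1)) ∈ F}

/-- The shift map on the one-sided Mahavier product. -/
def shiftPlus {X : Type*} (F : Set (X × X)) (x : MahavierPlus F) : MahavierPlus F :=
  ⟨fun n => (x : ℕ → X) (n + 1), fun n => x.2 (n + 1)⟩

/-- The shift map on the two-sided Mahavier product. -/
def shiftTwo {X : Type*} (F : Set (X × X)) (x : MahavierTwo F) : MahavierTwo F :=
  ⟨fun n => (x : ℤ → X) (n + 1), fun n => x.2 (n + 1)⟩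

/-- The metric `D(x,y) = sup_{n ≥ 1} d(x_n, y_n)/2^n` on one-sided sequences
(coordinates are indexed from `0` here, so the weight is `2^(n+1)`). -/
noncomputable def DPlus {X : Type*} [PseudoMetricSpace X] (x y : ℕ → X) : ℝ :=
  ⨆ n : ℕ, dist (x n) (y n) / 2 ^ (n + 1)

/-- The metric `D(x,y) = sup_{n ∈ ℤ} d(x_n, y_n)/2^{|n|}` on two-sided sequences. -/
noncomputable def DTwo {X : Type*} [PseudoMetricSpace X] (x y : ℤ → X) : ℝ :=
  ⨆ n : ℤ, dist (x n) (y n) / 2 ^ n.natAbs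

/-- Topological transitivity. -/
def TopTransitive {Y : Type*} [TopologicalSpace Y] (f : Y → Y) : Prop :=
  ∀ U V : Set Y, IsOpen U → IsOpen V → U.Nonempty → V.Nonempty →
    ∃ n : ℕ, (f^[n] '' U ∩ V).Nonempty

/-- Topological mixing. -/
def TopMixing {Y : Type*} [TopologicalSpace Y] (f : Y → Y) : Prop :=
  ∀ U V : Set Y, IsOpen U → IsOpen V → U.Nonempty → V.Nonempty →
    ∃ n₀ : ℕ, ∀ n : ℕ, n₀ ≤ n → (f^[n] '' U ∩ V).Nonempty

/-- The shadowing property for a map `f` with respect to a distance `dY`. -/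
def ShadowingProp {Y : Type*} (dY : Y → Y → ℝ) (f : Y → Y) : Prop :=
  ∀ ε : ℝ, 0 < ε → ∃ δ : ℝ, 0 < δ ∧ ∀ x : ℕ → Y,
    (∀ k : ℕ, dY (f (x k)) (x (k + 1)) < δ) →
    ∃ y : Y, ∀ k : ℕ, dY (f^[k] y) (x k) < ε

/-- The specification property for a map `f` with respect to a distance `dY`. -/
def SpecProp {Y : Type*} (dY : Y → Y → ℝ) (f : Y → Y) : Prop :=
  ∀ ε : ℝ, 0 < ε → ∃ N : ℕ, 0 < N ∧ ∀ n : ℕ, 0 < n →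
    ∀ x : Fin n → Y, ∀ k l : Fin n → ℕ,
      (∀ i, k i ≤ l i) →
      (∀ i j : Fin n, (i : ℕ) + 1 = (j : ℕ) → l i + N ≤ k j) →
      ∃ y : Y, ∀ i : Fin n, ∀ m : ℕ, k i ≤ m → m ≤ l i →
        dY (f^[m] y) (f^[m] (x i)) ≤ ε

/-- The CR-specification property for the one-sided Mahavier product of `F`. -/
def CRSpec {X : Type*} [PseudoMetricSpace X] (F : Set (X × X)) : Prop :=
  ∀ ε : ℝ, 0 < ε → ∃ N : ℕ, 0 < N ∧ ∀ n : ℕ, 0 < n →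
    ∀ x : Fin n → MahavierPlus F, ∀ k l : Fin n → ℕ,
      (∀ i, k i ≤ l i) →
      (∀ i j : Fin n, (i : ℕ) + 1 = (j : ℕ) → l i + N ≤ k j) →
      ∃ y : MahavierPlus F, ∀ i : Fin n, ∀ m : ℕ, k i ≤ m → m ≤ l i →
        dist ((x i : ℕ → X) m) ((y : ℕ → X) m) ≤ ε

/-- The image of a set under a relation. -/
def relImage {X : Type*} (F : Set (X × X)) (A : Set X) : Set X :=
  {y | ∃ a ∈ A, (a, y) ∈ F}

/-- Composition of relations. -/
def relComp {X : Type*} (F G : Set (X × X)) : Set (X × X) :=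
  {p | ∃ z : X, (p.1, z) ∈ F ∧ (z, p.2) ∈ G}

/-- Iterated composition `F^n` of a relation with itself. -/
def relPow {X : Type*} (F : Set (X × X)) : ℕ → Set (X × X)
  | 0 => {p | p.1 = p.2}
  | n + 1 => relComp (relPow F n) F

/-- Membership in the family `𝓕`: `G = F_A` for some finite set `A` of positive reals
containing `3`, `1`, and `1/2`, all of whose elements lie in `[1/3, 3]`, where
`F_A = {(x,y) ∈ [0,1]² : y = a·x for some a ∈ A}`. -/
def MemFamF (G : Set (ℝ × ℝ)) : Prop :=
  ∃ A : Finset ℝ, (3 : ℝ) ∈ A ∧ (1 : ℝ) ∈ A ∧ (1 / 2 : ℝ) ∈ A ∧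
    (∀ a ∈ A, (1 / 3 : ℝ) ≤ a ∧ a ≤ 3) ∧
    G = {p : ℝ × ℝ | p.1 ∈ Set.Icc (0 : ℝ) 1 ∧ p.2 ∈ Set.Icc (0 : ℝ) 1 ∧
          ∃ a ∈ A, p.2 = a * p.1}

set_option maxHeartbeats 2000000 in
/-- Given `G ∈ 𝓕`, `0 < ε ≤ 1`, and any finite trajectory
`(y_i)_{i=0}^p` under `G`, there is a descending interval trajectory
`([a_i, b_i])_{i=0}^p` under `G` with `[a_0,b_0] ⊆ [ε/9, 1]`,
`[a_i,b_i] ⊆ [y_i−ε, y_i+ε]` for all `i`, and `b_p − a_p ≥ ε²/9`. -/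
theorem stmt9 (G : Set (ℝ × ℝ)) (hG : MemFamF G)
    (ε : ℝ) (hε0 : 0 < ε) (hε1 : ε ≤ 1)
    (p : ℕ) (y : ℕ → ℝ) (hmem : ∀ i ≤ p, y i ∈ Set.Icc (0 : ℝ) 1)
    (htraj : ∀ i < p, (y i, y (i + 1)) ∈ G) :
    ∃ a b : ℕ → ℝ,
      (∀ i ≤ p, a i ≤ b i ∧ Set.Icc (a i) (b i) ⊆ Set.Icc (0 : ℝ) 1) ∧
      Set.Icc (a 0) (b 0) ⊆ Set.Icc (ε / 9) 1 ∧
      (∀ i < p, Set.Icc (a (i + 1)) (b (i + 1)) ⊆ relImage G (Set.Icc (a i) (b i))) ∧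
      (∀ i ≤ p, Set.Icc (a i) (b i) ⊆ Set.Icc (y i - ε) (y i + ε)) ∧
      ε ^ 2 / 9 ≤ b p - a p := by
  classical
  obtain ⟨A, hA3, hA1, hAh, hAb, hGeq⟩ := hG
  have hy : ∀ i ≤ p, 0 ≤ y i ∧ y i ≤ 1 := fun i hi => Set.mem_Icc.1 (hmem i hi)
  have hmul : ∀ i < p, ∃ c, c ∈ A ∧ y (i + 1) = c * y i ∧ 1 / 3 ≤ c ∧ c ≤ 3 := by
    intro i hi
    have h := htraj i hi
    rw [hGeq] at h
    obtain ⟨-, -, c, hcA, hce⟩ := h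
    exact ⟨c, hcA, hce, (hAb c hcA).1, (hAb c hcA).2⟩
  have himg : ∀ c ∈ A, ∀ u v z : ℝ, 0 ≤ u → v ≤ 1 → c * u ≤ z → z ≤ c * v → z ≤ 1 →
      z ∈ relImage G (Set.Icc u v) := by
    intro c hc u v z hu hv h1 h2 h3
    have hc0 : (0:ℝ) < c := lt_of_lt_of_le (by norm_num) (hAb c hc).1
    have hz0 : 0 ≤ z := le_trans (mul_nonneg hc0.le hu) h1
    refine ⟨z / c, Set.mem_Icc.2 ⟨(le_div_iff₀ hc0).2 (by linarith [mul_comm u c]),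
      (div_le_iff₀ hc0).2 (by linarith [mul_comm v c])⟩, ?_⟩
    rw [hGeq]
    simp only [Set.mem_setOf_eq, Set.mem_Icc]
    refine ⟨⟨div_nonneg hz0 hc0.le, ?_⟩, ⟨hz0, h3⟩, c, hc, ?_⟩
    · rw [div_le_one hc0]; nlinarith
    · field_simp
  by_cases hex : ∃ i, i ≤ p ∧ ε ≤ y i
  · -- Case B : some y i is at least ε
    set r := Nat.find hex with hrdef
    have hr1 : r ≤ p := (Nat.find_spec hex).1
    have hr2 : ε ≤ y r := (Nat.find_spec hex).2
    have hsmall_pre : ∀ i, i < r → y i < ε := by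
      intro i hi
      by_contra hcon
      exact Nat.find_min hex hi ⟨le_trans hi.le hr1, le_of_not_gt hcon⟩
    set q := Nat.findGreatest (fun i => ε ≤ y i) p with hqdef
    have hqp : q ≤ p := Nat.findGreatest_le p
    have hqy : ε ≤ y q := Nat.findGreatest_spec (P := fun i => ε ≤ y i) hr1 hr2
    have hrq : r ≤ q := Nat.le_findGreatest (P := fun i => ε ≤ y i) hr1 hr2
    have hsmall_post : ∀ i, q < i → i ≤ p → y i < ε := by
      intro i h1 h2
      exact lt_of_not_ge (Nat.findGreatest_is_greatest h1 h2)
    have hlam0 : (0:ℝ) ≤ 1 - ε / 2 := by linarith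
    have hq3 : q < p → y q ≤ 3 * y (q + 1) := by
      intro hqlt
      obtain ⟨c, hcA, hce, hc1, hc3⟩ := hmul q hqlt
      have := (hy q hqp).1
      nlinarith
    clear_value r q
    refine ⟨(fun i => if i < r then ε / 9 else if i ≤ q then y i * (1 - ε / 2)
        else if i = q + 1 then y q * (1 - ε / 2) / 2 else y q * (1 - ε / 2) / 4),
      (fun i => if i < r then ε else if i ≤ q then y i
        else if i = q + 1 then y q / 2 else y q / 4), ?_, ?_, ?_, ?_, ?_⟩
    · -- (1)
      intro i hip
      have hyi := hy i hip
      have hyq := hy q hqp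
      simp only
      split_ifs with h1 h2 h3
      · exact ⟨by linarith, Set.Icc_subset_Icc (by positivity) hε1⟩
      · exact ⟨by nlinarith, Set.Icc_subset_Icc (by nlinarith) hyi.2⟩
      · exact ⟨by nlinarith, Set.Icc_subset_Icc (by nlinarith) (by linarith)⟩
      · exact ⟨by nlinarith, Set.Icc_subset_Icc (by nlinarith) (by linarith)⟩
    · -- (2)
      have hy0 := hy 0 (Nat.zero_le p)
      simp only
      split_ifs with h1 h2
      · exact Set.Icc_subset_Icc le_rfl hε1
      · have hr0 : r = 0 := by omega
        rw [hr0] at hr2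
        refine Set.Icc_subset_Icc ?_ hy0.2
        nlinarith
      · omega
      · omega
    · -- (3) descending
      intro i hip
      have hyq := hy q hqp
      simp only
      split_ifs with h1 h2 h3 h4 h5 h6 h7 h8 h9 h10 h11 h12 h13 h14 h15
      all_goals try omega
      · -- prefix → prefix
        intro z hz
        rw [Set.mem_Icc] at hz
        exact himg 1 hA1 (ε / 9) ε z (by positivity) hε1 (by linarith) (by linarith)
          (by linarith)
      · -- prefix → track (i+1 = r)
        have hir : i + 1 = r := by omega
        have hεy : ε ≤ y (i + 1) := by rw [hir]; exact hr2
        obtain ⟨c, hcA, hce, hc1, hc3⟩ := hmul i hip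
        have hyi : y i < ε := hsmall_pre i (by omega)
        have hyi0 : 0 ≤ y i := (hy i (by omega)).1
        have hy3 : y (i + 1) ≤ 3 * ε := by nlinarith
        have hy1 : y (i + 1) ≤ 1 := (hy (i + 1) (by omega)).2
        intro z hz
        rw [Set.mem_Icc] at hz
        by_cases hzε : z ≤ ε
        · refine himg 1 hA1 (ε / 9) ε z (by positivity) hε1 ?_ (by linarith) (by linarith)
          nlinarith [mul_nonneg (sub_nonneg.2 hεy) hlam0]
        · exact himg 3 hA3 (ε / 9) ε z (by positivity) hε1 (by linarith) (by linarith)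
            (by linarith)
      · -- track → track
        obtain ⟨c, hcA, hce, hc1, hc3⟩ := hmul i hip
        have hyi := hy i (by omega)
        have hyi1 := hy (i + 1) (by omega)
        intro z hz
        rw [Set.mem_Icc] at hz
        have he : c * (y i * (1 - ε / 2)) = y (i + 1) * (1 - ε / 2) := by rw [hce]; ring
        refine himg c hcA (y i * (1 - ε / 2)) (y i) z (mul_nonneg hyi.1 hlam0) hyi.2 ?_ ?_
          (by linarith)
        · linarith
        · rw [← hce]; exact hz.2
      · -- track → half (i = q)
        have hiq : i = q := by omega
        subst hiq
        intro z hz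
        rw [Set.mem_Icc] at hz
        refine himg (1 / 2) hAh (y i * (1 - ε / 2)) (y i) z (mul_nonneg hyq.1 hlam0) hyq.2
          (by linarith) (by linarith) (by linarith)
      · -- half → quarter (i = q+1)
        intro z hz
        rw [Set.mem_Icc] at hz
        refine himg (1 / 2) hAh (y q * (1 - ε / 2) / 2) (y q / 2) z
          (by nlinarith [mul_nonneg hyq.1 hlam0]) (by linarith) (by linarith) (by linarith)
          (by linarith)
      · -- quarter → quarter
        intro z hz
        rw [Set.mem_Icc] at hz
        refine himg 1 hA1 (y q * (1 - ε / 2) / 4) (y q / 4) z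
          (by nlinarith [mul_nonneg hyq.1 hlam0]) (by linarith) (by linarith) (by linarith)
          (by linarith)
    · -- (4) window
      intro i hip
      have hyi := hy i hip
      have hyq := hy q hqp
      simp only
      split_ifs with h1 h2 h3
      · have : y i < ε := hsmall_pre i h1
        exact Set.Icc_subset_Icc (by linarith) (by linarith)
      · exact Set.Icc_subset_Icc (by nlinarith) (by linarith)
      · subst h3
        have hsp : y (q + 1) < ε := hsmall_post (q + 1) (by omega) hip
        have h3q : y q ≤ 3 * y (q + 1) := hq3 (by omega)
        refine Set.Icc_subset_Icc ?_ (by linarith)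
        nlinarith [mul_nonneg hyq.1 hlam0]
      · have hqlt : q < p := by omega
        have hsp : y (q + 1) < ε := hsmall_post (q + 1) (by omega) (by omega)
        have h3q : y q ≤ 3 * y (q + 1) := hq3 hqlt
        have hsi : y i < ε := hsmall_post i (by omega) hip
        refine Set.Icc_subset_Icc ?_ (by linarith)
        nlinarith [mul_nonneg hyq.1 hlam0]
    · -- (5) final length
      have hyq := hy q hqp
      simp only
      split_ifs with h1 h2 h3
      · omega
      · have hpq : p = q := by omega
        rw [hpq]
        nlinarith [mul_nonneg (sub_nonneg.2 hqy) hε0.le]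
      · nlinarith [mul_nonneg (sub_nonneg.2 hqy) hε0.le]
      · nlinarith [mul_nonneg (sub_nonneg.2 hqy) hε0.le]
  · -- Case A : all y i < ε
    push_neg at hex
    refine ⟨fun _ => ε / 9, fun _ => ε, ?_, ?_, ?_, ?_, ?_⟩
    · intro i hip
      exact ⟨by linarith, Set.Icc_subset_Icc (by positivity) hε1⟩
    · exact Set.Icc_subset_Icc le_rfl hε1
    · intro i hip z hz
      rw [Set.mem_Icc] at hz
      exact himg 1 hA1 (ε / 9) ε z (by positivity) hε1 (by linarith) (by linarith)
        (by linarith)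
    · intro i hip
      have h1 := hex i hip
      have h2 := (hy i hip).1
      exact Set.Icc_subset_Icc (by linarith) (by linarith)
    · nlinarith
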